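/- arXiv:2201.06046 — 4 statements merged into one kernel-verified Lean document; each statement's English description precedes it below -/
import Mathlib

section
/- Let L be a partial lattice with induced order ≤. For all a, b ∈ L: the set {a, b} has an upper bound with respect to ≤ if and only if join a b is defined, and in that case join a b = some c where c is the least upper bound of {a, b} with respect to ≤; dually, {a, b} has a lower bound if and only if meet a b is defined, and in that case meet a b = some d where d is the greatest lower bound of {a, b}. In particular the poset (L, ≤) satisfies the upper bound property and the lower bound property. -/
/-- A partial lattice: a type `L` with partial binary operations `join` and `meet`
(valued in `Option L`) satisfying strong idempotency, strong commutativity,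
strong associativity and the duality conditions. -/
structure IsPartialLattice {L : Type*} (join meet : L → L → Option L) : Prop where
  join_idem : ∀ a, join a a = some a
  meet_idem : ∀ a, meet a a = some a
  join_comm : ∀ a b, join a b = join b a
  meet_comm : ∀ a b, meet a b = meet b a
  join_assoc : ∀ a b c, (join a b).bind (fun d => join d c) = (join b c).bind (fun d => join a d)
  meet_assoc : ∀ a b c, (meet a b).bind (fun d => meet d c) = (meet b c).bind (fun d => meet a d)
  dual_join : ∀ a b, join a b = some a → meet a b = some b
  dual_meet : ∀ a b, meet a b = some a → join a b = some b

private theorem aux_bounds {L : Type*} {op : L → L → Option L}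
    (idem : ∀ a, op a a = some a)
    (comm : ∀ a b, op a b = op b a)
    (assoc : ∀ a b c, (op a b).bind (fun d => op d c) = (op b c).bind (fun d => op a d))
    (a b c : L) (h : op a b = some c) :
    op a c = some c ∧ op b c = some c ∧
      ∀ u, op a u = some u → op b u = some u → op c u = some u := by
  refine ⟨?_, ?_, ?_⟩
  · have H := assoc a a b
    rw [idem a, h] at H
    simp only [Option.bind_some] at H
    rw [← H]; exact h
  · have H := assoc a b b
    rw [h, idem b] at H
    simp only [Option.bind_some] at H
    rw [comm b c, H, h]
  · intro u hau hbu
    have H := assoc a b u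
    rw [h, hbu] at H
    simpa [hau] using H

private theorem aux_exists {L : Type*} {op : L → L → Option L}
    (assoc : ∀ a b c, (op a b).bind (fun d => op d c) = (op b c).bind (fun d => op a d))
    (a b u : L) (hau : op a u = some u) (hbu : op b u = some u) :
    (op a b).isSome := by
  have H := assoc a b u
  rw [hbu] at H
  simp only [Option.bind_some, hau] at H
  cases hab : op a b with
  | none => rw [hab] at H; simp at H
  | some c => simp

/-- With respect to the induced order `a ≤ b :↔ join a b = some b` of a partial lattice:
`{a, b}` has an upper bound iff `join a b` is defined, in which case its value is the least
upper bound of `{a, b}`; dually for `meet` and lower bounds. In particular the induced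
order satisfies the upper bound property and the lower bound property. -/
theorem partialLattice_bound_properties {L : Type*} (join meet : L → L → Option L)
    (hL : IsPartialLattice join meet) :
    (∀ a b : L,
      ((∃ u, join a u = some u ∧ join b u = some u) ↔ (join a b).isSome) ∧
      (∀ c, join a b = some c →
        join a c = some c ∧ join b c = some c ∧
        ∀ u, join a u = some u → join b u = some u → join c u = some u)) ∧
    (∀ a b : L,
      ((∃ l, join l a = some a ∧ join l b = some b) ↔ (meet a b).isSome) ∧
      (∀ d, meet a b = some d →
        join d a = some a ∧ join d b = some b ∧
        ∀ l, join l a = some a → join l b = some b → join l d = some d)) := by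
  obtain ⟨ji, mi, jc, mc, ja, ma, dj, dm⟩ := hL
  -- translation between the two orders
  have le_iff : ∀ x y : L, join x y = some y ↔ meet x y = some x := by
    intro x y
    constructor
    · intro h
      have := dj y x (by rw [jc]; exact h)
      rw [mc]; exact this
    · intro h
      exact dm x y h
  constructor
  · intro a b
    constructor
    · constructor
      · rintro ⟨u, hau, hbu⟩
        exact aux_exists ja a b u hau hbu
      · intro h
        obtain ⟨c, hc⟩ := Option.isSome_iff_exists.mp h
        obtain ⟨h1, h2, _⟩ := aux_bounds ji jc ja a b c hc
        exact ⟨c, h1, h2⟩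
    · intro c hc
      exact aux_bounds ji jc ja a b c hc
  · intro a b
    constructor
    · constructor
      · rintro ⟨l, hla, hlb⟩
        have hla' := (le_iff l a).mp hla
        have hlb' := (le_iff l b).mp hlb
        exact aux_exists ma a b l (by rw [mc]; exact hla') (by rw [mc]; exact hlb')
      · intro h
        obtain ⟨d, hd⟩ := Option.isSome_iff_exists.mp h
        obtain ⟨h1, h2, _⟩ := aux_bounds mi mc ma a b d hd
        -- h1 : meet a d = some d, i.e. d ≤ a
        have := (le_iff d a).mpr (by rw [mc]; exact h1)
        have := (le_iff d b).mpr (by rw [mc]; exact h2)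
        exact ⟨d, ‹join d a = some a›, ‹join d b = some b›⟩
    · intro d hd
      obtain ⟨h1, h2, h3⟩ := aux_bounds mi mc ma a b d hd
      refine ⟨(le_iff d a).mpr (by rw [mc]; exact h1),
              (le_iff d b).mpr (by rw [mc]; exact h2), ?_⟩
      intro l hla hlb
      have hla' : meet a l = some l := by rw [mc]; exact (le_iff l a).mp hla
      have hlb' : meet b l = some l := by rw [mc]; exact (le_iff l b).mp hlb
      have := h3 l hla' hlb'
      exact (le_iff l d).mpr (by rw [mc]; exact this)
end

section
/- Let P₁ and P₂ be posets satisfying the upper bound property and the lower bound property, and let K₁ = WithBot (WithTop P₁) and K₂ = WithBot (WithTop P₂) be their two-point extensions (lattices). Let h* : K₁ → K₂ be a map preserving binary suprema and binary infima, and let h : P₁ → P₂ be a map such that h*(↑x) = ↑(h x) for all x ∈ P₁. Then h preserves all existing joins and meets: for all a, b, c ∈ P₁, if c is the least upper bound of {a, b} in P₁ then h c is the least upper bound of {h a, h b} in P₂, and if c is the greatest lower bound of {a, b} in P₁ then h c is the greatest lower bound of {h a, h b} in P₂. -/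
/-- A poset satisfies the upper bound property if every pair of elements having
an upper bound has a least upper bound. -/
def UBP (P : Type*) [PartialOrder P] : Prop :=
  ∀ a b : P, (∃ u, a ≤ u ∧ b ≤ u) → ∃ c, IsLUB {a, b} c

/-- A poset satisfies the lower bound property if every pair of elements having
a lower bound has a greatest lower bound. -/
def LBP (P : Type*) [PartialOrder P] : Prop :=
  ∀ a b : P, (∃ l, l ≤ a ∧ l ≤ b) → ∃ c, IsGLB {a, b} c

/-- The canonical embedding of `P` into its two-point extension `WithBot (WithTop P)`. -/
def emb {P : Type*} (a : P) : WithBot (WithTop P) := ((a : WithTop P) : WithBot (WithTop P))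

lemma emb_le_emb {P : Type*} [PartialOrder P] {x y : P} : emb x ≤ emb y ↔ x ≤ y := by
  simp [emb]

lemma isLUB_emb {P : Type*} [PartialOrder P] {a b c : P} (hc : IsLUB {a, b} c) :
    IsLUB {emb a, emb b} (emb c) := by
  constructor
  · rintro x (rfl | rfl)
    · exact emb_le_emb.2 (hc.1 (by simp))
    · exact emb_le_emb.2 (hc.1 (by simp))
  · rintro (_ | (_ | u)) hu
    · exact absurd (hu (Set.mem_insert _ _)) (WithBot.not_coe_le_bot _)
    · exact (WithBot.coe_le_coe).2 le_top
    · refine emb_le_emb.2 (hc.2 ?_)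
      rintro x (rfl | rfl)
      · exact emb_le_emb.1 (hu (Set.mem_insert _ _))
      · exact emb_le_emb.1 (hu (by simp))

lemma isGLB_emb {P : Type*} [PartialOrder P] {a b c : P} (hc : IsGLB {a, b} c) :
    IsGLB {emb a, emb b} (emb c) := by
  constructor
  · rintro x (rfl | rfl)
    · exact emb_le_emb.2 (hc.1 (by simp))
    · exact emb_le_emb.2 (hc.1 (by simp))
  · rintro (_ | (_ | u)) hu
    · exact bot_le
    · exact absurd (hu (Set.mem_insert _ _))
        (by intro hle; exact WithTop.not_top_le_coe a (WithBot.coe_le_coe.1 hle))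
    · refine emb_le_emb.2 (hc.2 ?_)
      rintro x (rfl | rfl)
      · exact emb_le_emb.1 (hu (Set.mem_insert _ _))
      · exact emb_le_emb.1 (hu (by simp))

lemma isLUB_of_emb {P : Type*} [PartialOrder P] {a b c : P}
    (hc : IsLUB {emb a, emb b} (emb c)) : IsLUB {a, b} c := by
  constructor
  · rintro x (rfl | rfl)
    · exact emb_le_emb.1 (hc.1 (Set.mem_insert _ _))
    · exact emb_le_emb.1 (hc.1 (by simp))
  · intro u hu
    refine emb_le_emb.1 (hc.2 ?_)
    rintro x (rfl | rfl)
    · exact emb_le_emb.2 (hu (Set.mem_insert _ _))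
    · exact emb_le_emb.2 (hu (by simp))

lemma isGLB_of_emb {P : Type*} [PartialOrder P] {a b c : P}
    (hc : IsGLB {emb a, emb b} (emb c)) : IsGLB {a, b} c := by
  constructor
  · rintro x (rfl | rfl)
    · exact emb_le_emb.1 (hc.1 (Set.mem_insert _ _))
    · exact emb_le_emb.1 (hc.1 (by simp))
  · intro u hu
    refine emb_le_emb.1 (hc.2 ?_)
    rintro x (rfl | rfl)
    · exact emb_le_emb.2 (hu (Set.mem_insert _ _))
    · exact emb_le_emb.2 (hu (by simp))

/-- Let `P₁`, `P₂` be posets with the upper and lower bound properties and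
`K₁ = WithBot (WithTop P₁)`, `K₂ = WithBot (WithTop P₂)` their two-point extensions.
If `hstar : K₁ → K₂` preserves binary suprema and binary infima and `h : P₁ → P₂`
satisfies `hstar (↑x) = ↑(h x)` for all `x ∈ P₁`, then `h` preserves all existing joins
and meets: `c` the least upper bound of `{a, b}` in `P₁` implies `h c` is the least upper
bound of `{h a, h b}` in `P₂`, and dually for greatest lower bounds. -/
theorem restriction_is_homomorphism {P₁ P₂ : Type*} [PartialOrder P₁] [PartialOrder P₂]
    (hUBP₁ : UBP P₁) (hLBP₁ : LBP P₁) (hUBP₂ : UBP P₂) (hLBP₂ : LBP P₂)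
    (hstar : WithBot (WithTop P₁) → WithBot (WithTop P₂)) (h : P₁ → P₂)
    (hsup : ∀ x y s : WithBot (WithTop P₁), IsLUB {x, y} s → IsLUB {hstar x, hstar y} (hstar s))
    (hinf : ∀ x y i : WithBot (WithTop P₁), IsGLB {x, y} i → IsGLB {hstar x, hstar y} (hstar i))
    (hcomm : ∀ x : P₁, hstar (emb x) = emb (h x)) :
    (∀ a b c : P₁, IsLUB {a, b} c → IsLUB {h a, h b} (h c)) ∧
    (∀ a b c : P₁, IsGLB {a, b} c → IsGLB {h a, h b} (h c)) := by
  constructor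
  · intro a b c hc
    have := hsup _ _ _ (isLUB_emb hc)
    rw [hcomm, hcomm, hcomm] at this
    exact isLUB_of_emb this
  · intro a b c hc
    have := hinf _ _ _ (isGLB_emb hc)
    rw [hcomm, hcomm, hcomm] at this
    exact isGLB_of_emb this
end

section
/- Let P₁ and P₂ be posets satisfying the upper bound property and the lower bound property, and let h : P₁ → P₂ be a closed homomorphism. Define h* : WithBot (WithTop P₁) → WithBot (WithTop P₂) by h*(⊥) = ⊥, h*(⊤) = ⊤ and h*(↑x) = ↑(h x) for x ∈ P₁. Then h* preserves binary suprema and binary infima: h*(u ⊔ v) = h* u ⊔ h* v and h*(u ⊓ v) = h* u ⊓ h* v for all u, v ∈ WithBot (WithTop P₁). -/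
set_option linter.unusedSectionVars false

section Aux
variable {P : Type*} [PartialOrder P]

lemma emb_le_emb_s9 {a b : P} : emb a ≤ emb b ↔ a ≤ b := by simp [emb]

lemma emb_ne_bot (a : P) : emb a ≠ (⊥ : WithBot (WithTop P)) := by simp [emb]

lemma emb_ne_top (a : P) : emb a ≠ (⊤ : WithBot (WithTop P)) := by simp [emb]

lemma cases3 (x : WithBot (WithTop P)) : x = ⊥ ∨ x = ⊤ ∨ ∃ a, x = emb a := by
  cases x with
  | bot => left; rfl
  | coe y => cases y with
    | top => right; left; rfl
    | coe a => right; right; exact ⟨a, rfl⟩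

lemma not_top_le_emb (a : P) : ¬ ((⊤ : WithBot (WithTop P)) ≤ emb a) :=
  fun hle => emb_ne_top a (top_le_iff.1 hle)

lemma not_emb_le_bot (a : P) : ¬ (emb a ≤ (⊥ : WithBot (WithTop P))) :=
  fun hle => emb_ne_bot a (le_bot_iff.1 hle)

lemma emb_isLUB {a b c : P} (hc : IsLUB {a, b} c) :
    IsLUB {emb a, emb b} (emb c) := by
  constructor
  · rintro x (rfl | rfl)
    · exact emb_le_emb_s9.2 (hc.1 (Set.mem_insert _ _))
    · exact emb_le_emb_s9.2 (hc.1 (Set.mem_insert_of_mem _ rfl))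
  · intro w hw
    rcases cases3 w with rfl | rfl | ⟨u, rfl⟩
    · exact absurd (hw (Set.mem_insert _ _)) (not_emb_le_bot a)
    · exact le_top
    · refine emb_le_emb_s9.2 (hc.2 ?_)
      rintro x (rfl | rfl)
      · exact emb_le_emb_s9.1 (hw (Set.mem_insert _ _))
      · exact emb_le_emb_s9.1 (hw (Set.mem_insert_of_mem _ rfl))

lemma emb_isGLB {a b c : P} (hc : IsGLB {a, b} c) :
    IsGLB {emb a, emb b} (emb c) := by
  constructor
  · rintro x (rfl | rfl)
    · exact emb_le_emb_s9.2 (hc.1 (Set.mem_insert _ _))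
    · exact emb_le_emb_s9.2 (hc.1 (Set.mem_insert_of_mem _ rfl))
  · intro w hw
    rcases cases3 w with rfl | rfl | ⟨u, rfl⟩
    · exact bot_le
    · exact absurd (hw (Set.mem_insert _ _)) (not_top_le_emb a)
    · refine emb_le_emb_s9.2 (hc.2 ?_)
      rintro x (rfl | rfl)
      · exact emb_le_emb_s9.1 (hw (Set.mem_insert _ _))
      · exact emb_le_emb_s9.1 (hw (Set.mem_insert_of_mem _ rfl))

end Aux

section Gen
variable {α : Type*} [PartialOrder α]

lemma lub_bot_left [OrderBot α] {v s : α} (hs : IsLUB {⊥, v} s) : s = v :=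
  le_antisymm (hs.2 (by rintro x (rfl | rfl); exacts [bot_le, le_rfl]))
    (hs.1 (Set.mem_insert_of_mem _ rfl))

lemma isLUB_bot_left [OrderBot α] (v : α) : IsLUB {⊥, v} v :=
  ⟨by rintro x (rfl | rfl); exacts [bot_le, le_rfl],
   fun w hw => hw (Set.mem_insert_of_mem _ rfl)⟩

lemma lub_top_left [OrderTop α] {v s : α} (hs : IsLUB {⊤, v} s) : s = ⊤ :=
  top_le_iff.1 (hs.1 (Set.mem_insert _ _))

lemma isLUB_top_left [OrderTop α] (v : α) : IsLUB {⊤, v} ⊤ :=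
  ⟨by rintro x (rfl | rfl); exacts [le_rfl, le_top],
   fun w hw => hw (Set.mem_insert _ _)⟩

lemma glb_top_left [OrderTop α] {v s : α} (hs : IsGLB {⊤, v} s) : s = v :=
  le_antisymm (hs.1 (Set.mem_insert_of_mem _ rfl))
    (hs.2 (by rintro x (rfl | rfl); exacts [le_top, le_rfl]))

lemma isGLB_top_left [OrderTop α] (v : α) : IsGLB {⊤, v} v :=
  ⟨by rintro x (rfl | rfl); exacts [le_top, le_rfl],
   fun w hw => hw (Set.mem_insert_of_mem _ rfl)⟩

lemma glb_bot_left [OrderBot α] {v s : α} (hs : IsGLB {⊥, v} s) : s = ⊥ :=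
  le_bot_iff.1 (hs.1 (Set.mem_insert _ _))

lemma isGLB_bot_left [OrderBot α] (v : α) : IsGLB {⊥, v} ⊥ :=
  ⟨by rintro x (rfl | rfl); exacts [le_rfl, bot_le],
   fun w hw => hw (Set.mem_insert _ _)⟩

end Gen


/-- A closed homomorphism between posets with the upper and lower bound properties:
it preserves existing least upper bounds and greatest lower bounds, and it reflects
the existence of upper bounds and of lower bounds. -/
def IsClosedHom {P₁ P₂ : Type*} [PartialOrder P₁] [PartialOrder P₂] (h : P₁ → P₂) : Prop :=
  (∀ a b c : P₁, IsLUB {a, b} c → IsLUB {h a, h b} (h c)) ∧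
  (∀ a b c : P₁, IsGLB {a, b} c → IsGLB {h a, h b} (h c)) ∧
  (∀ a b : P₁, (∃ u, h a ≤ u ∧ h b ≤ u) → ∃ u, a ≤ u ∧ b ≤ u) ∧
  (∀ a b : P₁, (∃ l, l ≤ h a ∧ l ≤ h b) → ∃ l, l ≤ a ∧ l ≤ b)

/-- If `h : P₁ → P₂` is a closed homomorphism between posets with the upper and lower
bound properties, then the extension `hstar` of `h` to the two-point extensions, given
by `hstar ⊥ = ⊥`, `hstar ⊤ = ⊤` and `hstar ↑x = ↑(h x)`, preserves binary suprema and
binary infima (expressed via `IsLUB` and `IsGLB`). -/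
theorem closedHom_extension_preserves_sup_inf {P₁ P₂ : Type*}
    [PartialOrder P₁] [PartialOrder P₂]
    (hUBP₁ : UBP P₁) (hLBP₁ : LBP P₁) (hUBP₂ : UBP P₂) (hLBP₂ : LBP P₂)
    (h : P₁ → P₂) (hh : IsClosedHom h)
    (hstar : WithBot (WithTop P₁) → WithBot (WithTop P₂))
    (hbot : hstar ⊥ = ⊥) (htop : hstar ⊤ = ⊤)
    (hemb : ∀ x : P₁, hstar (emb x) = emb (h x)) :
    (∀ u v s : WithBot (WithTop P₁), IsLUB {u, v} s → IsLUB {hstar u, hstar v} (hstar s)) ∧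
    (∀ u v i : WithBot (WithTop P₁), IsGLB {u, v} i → IsGLB {hstar u, hstar v} (hstar i)) := by
  
  obtain ⟨hlub, hglb, hub, hlb⟩ := hh
  constructor
  · intro u v s hs
    rcases cases3 u with rfl | rfl | ⟨a, rfl⟩
    · rw [lub_bot_left hs, hbot]; exact isLUB_bot_left _
    · rw [lub_top_left hs, htop]; exact isLUB_top_left _
    · rcases cases3 v with rfl | rfl | ⟨b, rfl⟩
      · rw [Set.pair_comm] at hs ⊢
        rw [lub_bot_left hs, hbot]; exact isLUB_bot_left _
      · rw [Set.pair_comm] at hs ⊢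
        rw [lub_top_left hs, htop]; exact isLUB_top_left _
      · rcases cases3 s with rfl | rfl | ⟨c, rfl⟩
        · exact absurd (hs.1 (Set.mem_insert _ _)) (not_emb_le_bot a)
        · rw [htop, hemb, hemb]
          have hno : ¬ ∃ w, h a ≤ w ∧ h b ≤ w := by
            rintro ⟨w, hw⟩
            obtain ⟨u', hu'⟩ := hub a b ⟨w, hw⟩
            obtain ⟨c, hc⟩ := hUBP₁ a b ⟨u', hu'⟩
            exact not_top_le_emb c (hs.2 (emb_isLUB hc).1)
          constructor
          · rintro x (rfl | rfl) <;> exact le_top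
          · intro w hw
            rcases cases3 w with rfl | rfl | ⟨u', rfl⟩
            · exact absurd (hw (Set.mem_insert _ _)) (not_emb_le_bot _)
            · exact le_rfl
            · exact absurd ⟨u', emb_le_emb_s9.1 (hw (Set.mem_insert _ _)),
                emb_le_emb_s9.1 (hw (Set.mem_insert_of_mem _ rfl))⟩ hno
        · have hc : IsLUB {a, b} c := by
            constructor
            · rintro x (rfl | rfl)
              · exact emb_le_emb_s9.1 (hs.1 (Set.mem_insert _ _))
              · exact emb_le_emb_s9.1 (hs.1 (Set.mem_insert_of_mem _ rfl))
            · intro w hw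
              refine emb_le_emb_s9.1 (hs.2 ?_)
              rintro x (rfl | rfl)
              · exact emb_le_emb_s9.2 (hw (Set.mem_insert _ _))
              · exact emb_le_emb_s9.2 (hw (Set.mem_insert_of_mem _ rfl))
          rw [hemb, hemb, hemb]
          exact emb_isLUB (hlub a b c hc)
  · intro u v i hi
    rcases cases3 u with rfl | rfl | ⟨a, rfl⟩
    · rw [glb_bot_left hi, hbot]; exact isGLB_bot_left _
    · rw [glb_top_left hi, htop]; exact isGLB_top_left _
    · rcases cases3 v with rfl | rfl | ⟨b, rfl⟩
      · rw [Set.pair_comm] at hi ⊢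
        rw [glb_bot_left hi, hbot]; exact isGLB_bot_left _
      · rw [Set.pair_comm] at hi ⊢
        rw [glb_top_left hi, htop]; exact isGLB_top_left _
      · rcases cases3 i with rfl | rfl | ⟨c, rfl⟩
        · rw [hbot, hemb, hemb]
          have hno : ¬ ∃ w, w ≤ h a ∧ w ≤ h b := by
            rintro ⟨w, hw⟩
            obtain ⟨l', hl'⟩ := hlb a b ⟨w, hw⟩
            obtain ⟨c, hc⟩ := hLBP₁ a b ⟨l', hl'⟩
            exact not_emb_le_bot c (hi.2 (emb_isGLB hc).1)
          constructor
          · rintro x (rfl | rfl) <;> exact bot_le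
          · intro w hw
            rcases cases3 w with rfl | rfl | ⟨l', rfl⟩
            · exact le_rfl
            · exact absurd (hw (Set.mem_insert _ _)) (not_top_le_emb _)
            · exact absurd ⟨l', emb_le_emb_s9.1 (hw (Set.mem_insert _ _)),
                emb_le_emb_s9.1 (hw (Set.mem_insert_of_mem _ rfl))⟩ hno
        · exact absurd (hi.1 (Set.mem_insert _ _)) (not_top_le_emb a)
        · have hc : IsGLB {a, b} c := by
            constructor
            · rintro x (rfl | rfl)
              · exact emb_le_emb_s9.1 (hi.1 (Set.mem_insert _ _))
              · exact emb_le_emb_s9.1 (hi.1 (Set.mem_insert_of_mem _ rfl))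
            · intro w hw
              refine emb_le_emb_s9.1 (hi.2 ?_)
              rintro x (rfl | rfl)
              · exact emb_le_emb_s9.2 (hw (Set.mem_insert _ _))
              · exact emb_le_emb_s9.2 (hw (Set.mem_insert_of_mem _ rfl))
          rw [hemb, hemb, hemb]
          exact emb_isGLB (hglb a b c hc)
end

section
/- Let P be a nonempty poset satisfying the upper bound property and the lower bound property, K = WithBot (WithTop P), Θ a congruence on K, and E the equivalence relation on P defined by a E b iff (↑a, ↑b) ∈ Θ. On the quotient P/E define partial operations join, meet : P/E → P/E → Option (P/E) by: join [a] [b] = some [c] if there exists c ∈ P with (↑c, ↑a ⊔ ↑b) ∈ Θ, and none otherwise; meet [a] [b] = some [d] if there exists d ∈ P with (↑d, ↑a ⊓ ↑b) ∈ Θ, and none otherwise. Then these operations are well defined (independent of the chosen representatives), and (P/E, join, meet) is a partial lattice: it satisfies strong idempotency, strong commutativity, strong associativity and the duality conditions. -/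
/-- A congruence on a (lattice-ordered) poset `K`: an equivalence relation compatible
with binary suprema and binary infima, expressed via `IsLUB` and `IsGLB`. -/
def IsCongruence {K : Type*} [PartialOrder K] (Θ : K → K → Prop) : Prop :=
  Equivalence Θ ∧
  (∀ a b c d sa sb : K, Θ a b → Θ c d → IsLUB {a, c} sa → IsLUB {b, d} sb → Θ sa sb) ∧
  (∀ a b c d ia ib : K, Θ a b → Θ c d → IsGLB {a, c} ia → IsGLB {b, d} ib → Θ ia ib)

open Relator

theorem isLUB_pair_iff {α : Type*} [Preorder α] {a b s : α} :
    IsLUB {a, b} s ↔ a ≤ s ∧ b ≤ s ∧ ∀ z, a ≤ z → b ≤ z → s ≤ z := by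
  simp [IsLUB, IsLeast, upperBounds, lowerBounds, and_assoc]

theorem isGLB_pair_iff {α : Type*} [Preorder α] {a b s : α} :
    IsGLB {a, b} s ↔ s ≤ a ∧ s ≤ b ∧ ∀ z, z ≤ a → z ≤ b → z ≤ s :=
  isLUB_pair_iff (α := αᵒᵈ)

namespace Setoid

variable {P K : Type*} (Θ : Setoid K) (e : P → K)

open Classical in
noncomputable def preimageClass (x : K) : Option (Quotient (Θ.comap e)) :=
  if h : ∃ c, Θ (e c) x then some (Quotient.mk _ h.choose) else none

variable {Θ e}

theorem preimageClass_eq_some {x : K} {c : P} (h : Θ (e c) x) :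
    preimageClass Θ e x = some (Quotient.mk _ c) := by
  have hx : ∃ c, Θ (e c) x := ⟨c, h⟩
  rw [preimageClass, dif_pos hx]
  exact congrArg some (Quotient.sound (Θ.trans hx.choose_spec (Θ.symm h)))

theorem preimageClass_eq_none {x : K} (h : ∀ c, ¬ Θ (e c) x) : preimageClass Θ e x = none :=
  dif_neg (not_exists.2 h)

theorem preimageClass_congr {x y : K} (hxy : Θ x y) :
    preimageClass Θ e x = preimageClass Θ e y := by
  by_cases hx : ∃ c, Θ (e c) x
  · obtain ⟨c, hc⟩ := hx
    rw [preimageClass_eq_some hc, preimageClass_eq_some (Θ.trans hc hxy)]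
  · push Not at hx
    rw [preimageClass_eq_none hx, preimageClass_eq_none fun c hc => hx c (Θ.trans hc (Θ.symm hxy))]

theorem preimageClass_eq_some_iff {x : K} {c : P} :
    preimageClass Θ e x = some (Quotient.mk _ c) ↔ Θ (e c) x := by
  refine ⟨fun h => ?_, preimageClass_eq_some⟩
  by_cases hx : ∃ d, Θ (e d) x
  · obtain ⟨d, hd⟩ := hx
    rw [preimageClass_eq_some hd, Option.some_inj] at h
    have hdc := Quotient.exact h
    exact Θ.trans (Θ.symm hdc) hd
  · push Not at hx
    simp [preimageClass_eq_none hx] at h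

variable (Θ e) in
noncomputable def inducedOp (op : K → K → K) (hop : (Θ ⇒ Θ ⇒ Θ) op op) :
    Quotient (Θ.comap e) → Quotient (Θ.comap e) → Option (Quotient (Θ.comap e)) :=
  Quotient.lift₂ (fun a b => preimageClass Θ e (op (e a) (e b)))
    fun _ _ _ _ ha hb => preimageClass_congr (hop ha hb)

variable {op : K → K → K} {hop : (Θ ⇒ Θ ⇒ Θ) op op}

theorem inducedOp_mk (a b : P) :
    inducedOp Θ e op hop (Quotient.mk _ a) (Quotient.mk _ b) = preimageClass Θ e (op (e a) (e b)) :=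
  rfl

theorem inducedOp_idem (hidem : ∀ x, op x x = x) (q : Quotient (Θ.comap e)) :
    inducedOp Θ e op hop q q = some q := by
  induction q using Quotient.inductionOn with
  | h a => rw [inducedOp_mk, hidem]; exact preimageClass_eq_some (Θ.refl _)

theorem inducedOp_comm (hcomm : ∀ x y, op x y = op y x) (q r : Quotient (Θ.comap e)) :
    inducedOp Θ e op hop q r = inducedOp Θ e op hop r q := by
  induction q, r using Quotient.inductionOn₂ with
  | h a b => rw [inducedOp_mk, inducedOp_mk, hcomm]

theorem preimageClass_bind_inducedOp {x : K} (c : P)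
    (hx : (∃ d, Θ (e d) (op x (e c))) → ∃ d, Θ (e d) x) :
    (preimageClass Θ e x).bind (fun q => inducedOp Θ e op hop q (Quotient.mk _ c)) =
      preimageClass Θ e (op x (e c)) := by
  by_cases hd : ∃ d, Θ (e d) x
  · obtain ⟨d, hd⟩ := hd
    rw [preimageClass_eq_some hd, Option.bind_some, inducedOp_mk]
    exact preimageClass_congr (hop hd (Θ.refl _))
  · push Not at hd
    rw [preimageClass_eq_none hd, preimageClass_eq_none fun d h => (hx ⟨d, h⟩).elim hd,
      Option.bind_none]

theorem inducedOp_assoc (hassoc : ∀ x y z, op (op x y) z = op x (op y z))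
    (hcomm : ∀ x y, op x y = op y x)
    (hclosed : ∀ a b, (∃ c, op (e a) (e b) = e c) ∨ ∀ z, op (op (e a) (e b)) z = op (e a) (e b))
    (q r s : Quotient (Θ.comap e)) :
    (inducedOp Θ e op hop q r).bind (fun t => inducedOp Θ e op hop t s) =
      (inducedOp Θ e op hop r s).bind (fun t => inducedOp Θ e op hop q t) := by
  have key : ∀ a b c, (inducedOp Θ e op hop (Quotient.mk _ a) (Quotient.mk _ b)).bind
      (fun t => inducedOp Θ e op hop t (Quotient.mk _ c)) =
        preimageClass Θ e (op (op (e a) (e b)) (e c)) := by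
    intro a b c
    refine preimageClass_bind_inducedOp c fun h => ?_
    rcases hclosed a b with ⟨d, hd⟩ | habsorb
    · exact ⟨d, hd ▸ Θ.refl _⟩
    · rwa [habsorb] at h
  induction q, r, s using Quotient.inductionOn₃ with
  | h a b c =>
    simp only [inducedOp_comm hcomm (Quotient.mk _ a), key, hassoc, hcomm (e a)]

theorem inducedOp_eq_some_of_absorb {op₁ op₂ : K → K → K} {hop₁ : (Θ ⇒ Θ ⇒ Θ) op₁ op₁}
    {hop₂ : (Θ ⇒ Θ ⇒ Θ) op₂ op₂} (habsorb : ∀ x y, op₂ (op₁ x y) y = y)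
    {q r : Quotient (Θ.comap e)} (h : inducedOp Θ e op₁ hop₁ q r = some q) :
    inducedOp Θ e op₂ hop₂ q r = some r := by
  induction q, r using Quotient.inductionOn₂ with
  | h a b =>
    rw [inducedOp_mk, preimageClass_eq_some_iff] at h ⊢
    have h₂ := hop₂ h (Θ.refl (e b))
    rw [habsorb] at h₂
    exact Θ.symm h₂

end Setoid

section TwoPointExtension

variable {P : Type*} [PartialOrder P]

theorem UBP.exists_isLUB_pair (hU : UBP P) (x y : WithBot (WithTop P)) : ∃ s, IsLUB {x, y} s := by
  simp only [isLUB_pair_iff]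
  induction x using WithBot.recBotCoe with
  | bot => exact ⟨y, by simp⟩
  | coe x =>
    induction y using WithBot.recBotCoe with
    | bot => exact ⟨x, by simp⟩
    | coe y =>
      induction x using WithTop.recTopCoe with
      | top => exact ⟨⊤, by simp⟩
      | coe a =>
        induction y using WithTop.recTopCoe with
        | top => exact ⟨⊤, by simp⟩
        | coe b =>
          by_cases h : ∃ u, a ≤ u ∧ b ≤ u
          · obtain ⟨c, hc⟩ := hU a b h
            rw [isLUB_pair_iff] at hc
            exact ⟨emb c, by simpa [emb, WithTop.forall] using hc⟩
          · exact ⟨⊤, by simpa [WithTop.forall] using h⟩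

theorem LBP.exists_isGLB_pair (hL : LBP P) (x y : WithBot (WithTop P)) : ∃ s, IsGLB {x, y} s := by
  simp only [isGLB_pair_iff]
  induction x using WithBot.recBotCoe with
  | bot => exact ⟨⊥, by simp⟩
  | coe x =>
    induction y using WithBot.recBotCoe with
    | bot => exact ⟨⊥, by simp⟩
    | coe y =>
      induction x using WithTop.recTopCoe with
      | top => exact ⟨y, by simp⟩
      | coe a =>
        induction y using WithTop.recTopCoe with
        | top => exact ⟨emb a, by simp [emb]⟩
        | coe b =>
          by_cases h : ∃ l, l ≤ a ∧ l ≤ b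
          · obtain ⟨c, hc⟩ := hL a b h
            rw [isGLB_pair_iff] at hc
            exact ⟨emb c, by simpa [emb, WithBot.forall, WithTop.forall] using hc⟩
          · exact ⟨⊥, by simpa [WithBot.forall, WithTop.forall] using h⟩

theorem eq_emb_or_eq_top_of_isLUB_emb_pair {a b : P} {s : WithBot (WithTop P)}
    (hs : IsLUB {emb a, emb b} s) : (∃ c, s = emb c) ∨ s = ⊤ := by
  have ha : emb a ≤ s := hs.1 (Set.mem_insert _ _)
  induction s using WithBot.recBotCoe with
  | bot => exact absurd ha (by simp [emb])
  | coe s =>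
    induction s using WithTop.recTopCoe with
    | top => exact Or.inr rfl
    | coe c => exact Or.inl ⟨c, rfl⟩

theorem eq_emb_or_eq_bot_of_isGLB_emb_pair {a b : P} {s : WithBot (WithTop P)}
    (hs : IsGLB {emb a, emb b} s) : (∃ c, s = emb c) ∨ s = ⊥ := by
  have ha : s ≤ emb a := hs.1 (Set.mem_insert _ _)
  induction s using WithBot.recBotCoe with
  | bot => exact Or.inr rfl
  | coe s =>
    induction s using WithTop.recTopCoe with
    | top => exact absurd ha (by simp [emb])
    | coe c => exact Or.inl ⟨c, rfl⟩

noncomputable abbrev twoPointLattice (hU : UBP P) (hL : LBP P) : Lattice (WithBot (WithTop P)) :=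
  Lattice.ofIsLUBofIsGLB (fun x y => (hU.exists_isLUB_pair x y).choose)
    (fun x y => (hL.exists_isGLB_pair x y).choose)
    (fun x y => (hU.exists_isLUB_pair x y).choose_spec)
    (fun x y => (hL.exists_isGLB_pair x y).choose_spec)

end TwoPointExtension

theorem quotient_partialLattice_general {P : Type*} [PartialOrder P]
    (hUBP : UBP P) (hLBP : LBP P)
    (Θ : WithBot (WithTop P) → WithBot (WithTop P) → Prop)
    (hΘ : IsCongruence Θ)
    (st : Setoid P) (hst : ∀ a b : P, st.r a b ↔ Θ (emb a) (emb b)) :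
    ∃ join meet : Quotient st → Quotient st → Option (Quotient st),
      (∀ a b : P, ∀ s : WithBot (WithTop P), IsLUB {emb a, emb b} s →
        (∀ c : P, Θ (emb c) s →
          join (Quotient.mk st a) (Quotient.mk st b) = some (Quotient.mk st c)) ∧
        ((∀ c : P, ¬ Θ (emb c) s) →
          join (Quotient.mk st a) (Quotient.mk st b) = none)) ∧
      (∀ a b : P, ∀ i : WithBot (WithTop P), IsGLB {emb a, emb b} i →
        (∀ d : P, Θ (emb d) i →
          meet (Quotient.mk st a) (Quotient.mk st b) = some (Quotient.mk st d)) ∧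
        ((∀ d : P, ¬ Θ (emb d) i) →
          meet (Quotient.mk st a) (Quotient.mk st b) = none)) ∧
      IsPartialLattice join meet := by
  obtain ⟨hequiv, hsup, hinf⟩ := hΘ
  let _ := twoPointLattice hUBP hLBP
  obtain ⟨Θ, rfl⟩ : ∃ Θ' : Setoid (WithBot (WithTop P)), ⇑Θ' = Θ := ⟨⟨Θ, hequiv⟩, rfl⟩
  obtain rfl : st = Θ.comap emb := Setoid.ext hst
  have hsup' : (Θ ⇒ Θ ⇒ Θ) (· ⊔ ·) (· ⊔ ·) := fun _ _ h₁ _ _ h₂ =>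
    hsup _ _ _ _ _ _ h₁ h₂ isLUB_pair isLUB_pair
  have hinf' : (Θ ⇒ Θ ⇒ Θ) (· ⊓ ·) (· ⊓ ·) := fun _ _ h₁ _ _ h₂ =>
    hinf _ _ _ _ _ _ h₁ h₂ isGLB_pair isGLB_pair
  refine ⟨Θ.inducedOp emb _ hsup', Θ.inducedOp emb _ hinf', ?_, ?_, ?_⟩
  · intro a b s hs
    obtain rfl := hs.unique isLUB_pair
    exact ⟨fun c => Setoid.preimageClass_eq_some, Setoid.preimageClass_eq_none⟩
  · intro a b i hi
    obtain rfl := hi.unique isGLB_pair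
    exact ⟨fun d => Setoid.preimageClass_eq_some, Setoid.preimageClass_eq_none⟩
  exact
    { join_idem := Setoid.inducedOp_idem sup_idem
      meet_idem := Setoid.inducedOp_idem inf_idem
      join_comm := Setoid.inducedOp_comm sup_comm
      meet_comm := Setoid.inducedOp_comm inf_comm
      join_assoc := Setoid.inducedOp_assoc sup_assoc sup_comm fun _ _ =>
        (eq_emb_or_eq_top_of_isLUB_emb_pair isLUB_pair).imp_right fun h _ => by
          rw [h, top_sup_eq]
      meet_assoc := Setoid.inducedOp_assoc inf_assoc inf_comm fun _ _ =>
        (eq_emb_or_eq_bot_of_isGLB_emb_pair isGLB_pair).imp_right fun h _ => by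
          rw [h, bot_inf_eq]
      dual_join _ _ := Setoid.inducedOp_eq_some_of_absorb fun _ _ => inf_eq_right.2 le_sup_right
      dual_meet _ _ := Setoid.inducedOp_eq_some_of_absorb fun _ _ => sup_eq_right.2 inf_le_right }

/-- Let `P` be a nonempty poset with the upper and lower bound properties,
`K = WithBot (WithTop P)`, `Θ` a congruence on `K` and `E` the equivalence relation
`a E b ↔ (↑a, ↑b) ∈ Θ` on `P` (given as a setoid `st`). Then there exist well-defined
partial operations `join` and `meet` on the quotient `P/E` such that
`join [a] [b] = some [c]` iff some `c ∈ P` satisfies `(↑c, ↑a ⊔ ↑b) ∈ Θ` (and `none`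
otherwise), dually for `meet`, and these operations make `P/E` a partial lattice. -/
theorem quotient_partialLattice {P : Type*} [PartialOrder P] [Nonempty P]
    (hUBP : UBP P) (hLBP : LBP P)
    (Θ : WithBot (WithTop P) → WithBot (WithTop P) → Prop)
    (hΘ : IsCongruence Θ)
    (st : Setoid P) (hst : ∀ a b : P, st.r a b ↔ Θ (emb a) (emb b)) :
    ∃ join meet : Quotient st → Quotient st → Option (Quotient st),
      (∀ a b : P, ∀ s : WithBot (WithTop P), IsLUB {emb a, emb b} s →
        (∀ c : P, Θ (emb c) s →
          join (Quotient.mk st a) (Quotient.mk st b) = some (Quotient.mk st c)) ∧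
        ((∀ c : P, ¬ Θ (emb c) s) →
          join (Quotient.mk st a) (Quotient.mk st b) = none)) ∧
      (∀ a b : P, ∀ i : WithBot (WithTop P), IsGLB {emb a, emb b} i →
        (∀ d : P, Θ (emb d) i →
          meet (Quotient.mk st a) (Quotient.mk st b) = some (Quotient.mk st d)) ∧
        ((∀ d : P, ¬ Θ (emb d) i) →
          meet (Quotient.mk st a) (Quotient.mk st b) = none)) ∧
      IsPartialLattice join meet :=
  quotient_partialLattice_general hUBP hLBP Θ hΘ st hst
end
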